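/- arXiv:1908.02250 — 7 statements merged into one kernel-verified Lean document; each statement's English description precedes it below -/
import Mathlib

section
/- For every positive integer n with n < 2^k (k a positive integer), D(n + 2^k) = D(n) + (n+1)·(⌊log₂ n⌋ - k + 2) + 2^k - 2^(⌊log₂ n⌋ + 1). -/
/-- f m = (#1 digits) - (#0 digits) in the binary expansion of m. -/
def f (m : ℕ) : ℤ :=
  2 * ((Nat.digits 2 m).count 1 : ℤ) - ((Nat.digits 2 m).length : ℤ)

/-- Cumulated deficient binary digit sum (OEIS A268289), D 0 = 0. -/
def D (n : ℕ) : ℤ := ∑ m ∈ Finset.Icc 1 n, f m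

/-!
For `j < 2 ^ k` the binary expansion of `2 ^ k + j` is that of `j`, padded with zeros to
length `k`, followed by a `1`; hence `f (2 ^ k + j) = f j + len j + 1 - k`. Splitting
`D (n + 2 ^ k)` at `2 ^ k`, the upper block therefore contributes `D n`, a sum of binary lengths,
and `(n + 1) (1 - k)`. The same identity gives `∑_{m < 2^k} f m = 2 ^ k - 1` by induction on `k`,
and `∑_{m < N} len m` is linear in `N` on each interval `[2^a, 2^(a+1)]`, where all numbers have
`a + 1` digits.
-/

open Finset

lemma D_eq_sum_range (n : ℕ) : D n = ∑ m ∈ range (n + 1), f m := by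
  have hf0 : f 0 = 0 := by simp [f]
  rw [D, range_eq_Ico, sum_eq_sum_Ico_succ_bot (by omega : 0 < n + 1), hf0, zero_add, zero_add,
    Ico_add_one_right_eq_Icc]

lemma digits_two_pow_add {k j : ℕ} (hj : j < 2 ^ k) :
    Nat.digits 2 (2 ^ k + j) =
      Nat.digits 2 j ++ List.replicate (k - (Nat.digits 2 j).length) 0 ++ [1] := by
  have hlen : (Nat.digits 2 j).length ≤ k := (Nat.digits_length_le_iff one_lt_two j).2 hj
  have := Nat.digits_append_zeroes_append_digits (k := k - (Nat.digits 2 j).length)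
    (m := 1) (n := j) one_lt_two one_pos
  rw [Nat.add_sub_cancel' hlen, mul_one, add_comm j] at this
  simpa using this.symm

lemma length_digits_two_pow_add {k j : ℕ} (hj : j < 2 ^ k) :
    (Nat.digits 2 (2 ^ k + j)).length = k + 1 := by
  have hlen : (Nat.digits 2 j).length ≤ k := (Nat.digits_length_le_iff one_lt_two j).2 hj
  simp only [digits_two_pow_add hj, List.length_append, List.length_replicate,
    List.length_singleton]
  omega

lemma f_two_pow_add {k j : ℕ} (hj : j < 2 ^ k) :
    f (2 ^ k + j) = f j + (Nat.digits 2 j).length + 1 - k := by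
  have hcount : (Nat.digits 2 (2 ^ k + j)).count 1 = (Nat.digits 2 j).count 1 + 1 := by
    rw [digits_two_pow_add hj]
    simp [List.count_replicate]
  simp only [f, hcount, length_digits_two_pow_add hj]
  push_cast
  ring

lemma sum_range_f_two_pow_add {k N : ℕ} (hN : N ≤ 2 ^ k) :
    ∑ j ∈ range N, f (2 ^ k + j) = ∑ j ∈ range N, f j +
      ∑ j ∈ range N, ((Nat.digits 2 j).length : ℤ) + N * (1 - k) := by
  rw [sum_congr rfl fun j hj => f_two_pow_add ((mem_range.1 hj).trans_le hN)]
  simp only [add_sub_assoc, add_assoc, sum_add_distrib, sum_const, card_range, nsmul_eq_mul]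

lemma sum_range_length_digits_two {a N : ℕ} (haN : 2 ^ a ≤ N) (hN : N ≤ 2 ^ (a + 1)) :
    ∑ m ∈ range N, ((Nat.digits 2 m).length : ℤ) = N * (a + 1) - 2 ^ (a + 1) + 1 := by
  induction a generalizing N with
  | zero =>
    obtain rfl | rfl : N = 1 ∨ N = 2 := by simp at haN hN; omega
    · simp
    · simp [sum_range_succ]
  | succ a ih =>
    obtain ⟨r, rfl⟩ := Nat.exists_eq_add_of_le haN
    have hr : r ≤ 2 ^ (a + 1) := by rw [pow_succ 2 (a + 1)] at hN; omega
    have hupper :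
        ∑ j ∈ range r, ((Nat.digits 2 (2 ^ (a + 1) + j)).length : ℤ) = r * (a + 2) := by
      rw [sum_congr rfl fun j hj =>
        congrArg ((↑) : ℕ → ℤ) (length_digits_two_pow_add ((mem_range.1 hj).trans_le hr))]
      simp only [sum_const, card_range, nsmul_eq_mul]
      push_cast
      ring
    rw [sum_range_add, ih (Nat.pow_le_pow_right two_pos (Nat.le_add_right a 1)) le_rfl, hupper]
    push_cast
    ring

lemma sum_range_f_two_pow (k : ℕ) : ∑ m ∈ range (2 ^ k), f m = 2 ^ k - 1 := by
  induction k with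
  | zero => simp [f]
  | succ k ih =>
    rw [pow_succ, mul_two, sum_range_add, sum_range_f_two_pow_add le_rfl, ih,
      sum_range_length_digits_two le_rfl (Nat.pow_le_pow_right two_pos (Nat.le_add_right k 1))]
    push_cast
    ring

theorem stmt_0_general (n k : ℕ) (h : n < 2 ^ k) :
    D (n + 2 ^ k) =
      D n + (n + 1) * ((Nat.log 2 n : ℤ) - k + 2) + 2 ^ k - 2 ^ (Nat.log 2 n + 1) := by
  have hlen := sum_range_length_digits_two (Nat.pow_log_le_add_one 2 n)
    (Nat.lt_pow_succ_log_self one_lt_two n)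
  rw [D_eq_sum_range, D_eq_sum_range n, show n + 2 ^ k + 1 = 2 ^ k + (n + 1) by ring,
    sum_range_add, sum_range_f_two_pow, sum_range_f_two_pow_add h, hlen]
  push_cast
  ring

theorem stmt_0 (n k : ℕ) (hn : 0 < n) (hk : 0 < k) (h : n < 2 ^ k) :
    D (n + 2 ^ k) =
      D n + (n + 1) * ((Nat.log 2 n : ℤ) - k + 2) + 2 ^ k - 2 ^ (Nat.log 2 n + 1) :=
  stmt_0_general n k h
end

section
/- For every positive integer k, D(2^k - 1) = 2^k - 1. -/
/-!
Appending a binary digit `r` to a positive number changes `f` by `2r - 1`, so the two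
numbers `2j` and `2j + 1` together contribute `2 f(j)`. Grouping `1, …, 2n + 1` as `1` followed
by these pairs gives `D(2n + 1) = 2 D(n) + 1`, and iterating from `D(0) = 0` along
`2^(k+1) - 1 = 2 (2^k - 1) + 1` gives `D(2^k - 1) = 2^k - 1`.
-/

lemma f_add_two_mul {r j : ℕ} (hr : r < 2) (hj : j ≠ 0) :
    f (r + 2 * j) = f j + 2 * r - 1 := by
  simp only [f, Nat.digits_add 2 one_lt_two r j hr (Or.inr hj), List.count_cons,
    List.length_cons]
  interval_cases r <;> simp <;> ring

lemma f_one : f 1 = 1 := by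
  simp [f]

lemma D_zero : D 0 = 0 := by
  simp [D]

lemma D_succ (n : ℕ) : D (n + 1) = D n + f (n + 1) :=
  Finset.sum_Icc_succ_top (Nat.le_add_left 1 n) f

lemma D_two_mul_add_one (n : ℕ) : D (2 * n + 1) = 2 * D n + 1 := by
  induction n with
  | zero => simp [D_succ, D_zero, f_one]
  | succ n ih =>
    have h_even : f (2 * (n + 1)) = f (n + 1) - 1 := by
      simpa using f_add_two_mul (r := 0) (by norm_num) n.succ_ne_zero
    have h_odd : f (2 * (n + 1) + 1) = f (n + 1) + 1 := by
      rw [add_comm, f_add_two_mul (by norm_num) n.succ_ne_zero]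
      ring
    have h_pair : 2 * (n + 1) = 2 * n + 1 + 1 := by ring
    rw [D_succ, D_succ, h_odd, h_pair, D_succ, ih, ← h_pair, h_even]
    ring

theorem stmt_1_general (k : ℕ) : D (2 ^ k - 1) = 2 ^ k - 1 := by
  induction k with
  | zero => simp [D_zero]
  | succ k ih =>
    have h_pred : 2 ^ (k + 1) - 1 = 2 * (2 ^ k - 1) + 1 := by
      have := Nat.one_le_two_pow (n := k)
      rw [pow_succ]
      omega
    rw [h_pred, D_two_mul_add_one, ih]
    ring

theorem stmt_1 (k : ℕ) (hk : 0 < k) : D (2 ^ k - 1) = 2 ^ k - 1 :=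
  stmt_1_general k
end

section
/- For every nonnegative integer n, D(n) equals the cardinality of the set S_n = { m : 1 ≤ m ≤ n and ((n - m) mod 2^(⌊log₂ m⌋ + 1)) < 2^(⌊log₂ m⌋) }. -/
/-- The set S n from the paper (S 0 = ∅). -/
def S (n : ℕ) : Finset ℕ :=
  (Finset.Icc 1 n).filter
    (fun m => (n - m) % 2 ^ (Nat.log 2 m + 1) < 2 ^ (Nat.log 2 m))

/-!
Membership of `m` in `S n` says that bit `log₂ m` of `n - m` is `0`. Going from `n - 1` to `n`,
that bit of `n - m` changes only when `2 ^ k ∣ n - m` with `k = log₂ m`; for each `k < log₂ n`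
this singles out exactly one `m < n`, namely `2 ^ k + n % 2 ^ k`, which enters `S` when bit `k`
of `n` is `1` and leaves it when that bit is `0`. Together with `m = n ∈ S n` this gives
`|S n| - |S (n - 1)| = ∑_{k ≤ log₂ n} (±1) = f n`.
-/

open Finset

def bitSign (b : Bool) : ℤ := if b then 1 else -1

@[simp] lemma bitSign_true : bitSign true = 1 := rfl

@[simp] lemma bitSign_not (b : Bool) : bitSign (!b) = -bitSign b := by
  cases b <;> rfl

lemma f_eq_sum_bitSign {n : ℕ} (hn : n ≠ 0) :
    f n = ∑ k ∈ range (Nat.log 2 n + 1), bitSign (n.testBit k) := by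
  induction n using Nat.strong_induction_on with
  | _ n ih =>
    rcases lt_or_ge n 2 with hlt | hge
    · obtain rfl : n = 1 := by omega
      decide
    · have hlog : Nat.log 2 n = Nat.log 2 (n / 2) + 1 := by
        have := Nat.log_div_base 2 n
        have := (Nat.le_log_iff_pow_le one_lt_two hn (x := 1)).mpr (by simpa using hge)
        omega
      have hf : f n = bitSign (decide (n % 2 = 1)) + f (n / 2) := by
        rw [f, f, Nat.digits_def' one_lt_two (by omega), List.count_cons, List.length_cons]
        rcases Nat.mod_two_eq_zero_or_one n with h | h <;> simp [h, bitSign] <;> ring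
      rw [hf, ih _ (by omega) (by omega), hlog, sum_range_succ' _ (Nat.log 2 (n / 2) + 1)]
      simp only [Nat.testBit_add_one, Nat.testBit_zero]
      ring

lemma testBit_log_two {n : ℕ} (hn : n ≠ 0) : n.testBit (Nat.log 2 n) = true := by
  rw [← Nat.log2_eq_log_two]; exact Nat.testBit_log2 hn

lemma mod_two_pow_succ_lt_iff (x k : ℕ) : x % 2 ^ (k + 1) < 2 ^ k ↔ x.testBit k = false := by
  rw [Nat.mod_pow_succ, Nat.testBit_eq_decide_div_mod_eq]
  have := Nat.mod_lt x (Nat.two_pow_pos k)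
  rcases Nat.mod_two_eq_zero_or_one (x / 2 ^ k) with h | h <;> simp [h, this]

lemma testBit_add_one_eq_xor (x k : ℕ) :
    (x + 1).testBit k = (x.testBit k ^^ decide (2 ^ k ∣ x + 1)) := by
  simp only [Nat.testBit_eq_decide_div_mod_eq, Nat.succ_div]
  split_ifs with h <;>
    simp only [h, Nat.add_zero, decide_true, decide_false, Bool.xor_true, Bool.xor_false]
  rcases Nat.mod_two_eq_zero_or_one (x / 2 ^ k) with h | h <;> simp [Nat.add_mod, h]

lemma card_S_eq_sum (n : ℕ) :
    ((S n).card : ℤ) = ∑ m ∈ Icc 1 n, if (n - m).testBit (Nat.log 2 m) then 0 else 1 := by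
  rw [S, card_filter, Nat.cast_sum]
  refine sum_congr rfl fun m _ => ?_
  simp only [mod_two_pow_succ_lt_iff]
  cases (n - m).testBit (Nat.log 2 m) <;> simp

lemma indicator_testBit_add_one (x k : ℕ) :
    (if (x + 1).testBit k then 0 else 1 : ℤ) =
      (if x.testBit k then 0 else 1) +
        if 2 ^ k ∣ x + 1 then -bitSign ((x + 1).testBit k) else 0 := by
  rw [testBit_add_one_eq_xor]
  cases x.testBit k <;> by_cases h : 2 ^ k ∣ x + 1 <;> simp [h, bitSign]

/-- The unique `m` with `Nat.log 2 m = k` and `m ≡ n [MOD 2 ^ k]`. -/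
def blockRep (n k : ℕ) : ℕ := 2 ^ k + n % 2 ^ k

lemma log_blockRep (n k : ℕ) : Nat.log 2 (blockRep n k) = k := by
  have := Nat.mod_lt n (Nat.two_pow_pos k)
  exact Nat.log_eq_of_pow_le_of_lt_pow (by simp [blockRep]) (by rw [blockRep, pow_succ]; omega)

lemma blockRep_lt_iff (n k : ℕ) : blockRep n k < n ↔ k < Nat.log 2 n := by
  have hdiv := Nat.div_add_mod n (2 ^ k)
  have hpos := Nat.two_pow_pos k
  rcases eq_or_ne n 0 with rfl | hn
  · simp
  rw [Nat.lt_iff_add_one_le (n := Nat.log 2 n), Nat.le_log_iff_pow_le one_lt_two hn, pow_succ',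
    ← Nat.le_div_iff_mul_le hpos,
    show blockRep n k < n ↔ 2 ^ k * 1 < 2 ^ k * (n / 2 ^ k) by rw [blockRep]; omega,
    Nat.mul_lt_mul_left hpos]
  omega

lemma dvd_sub_blockRep (n k : ℕ) : 2 ^ k ∣ n - blockRep n k := by
  rw [blockRep, add_comm, ← Nat.sub_sub]
  exact Nat.dvd_sub (Nat.dvd_sub_mod n) dvd_rfl

lemma eq_blockRep {n m : ℕ} (hm : m ≠ 0) (hmn : m ≤ n) (hdvd : 2 ^ Nat.log 2 m ∣ n - m) :
    m = blockRep n (Nat.log 2 m) := by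
  have hmod : m % 2 ^ Nat.log 2 m = n % 2 ^ Nat.log 2 m := (Nat.modEq_iff_dvd' hmn).mpr hdvd
  have hlo := Nat.pow_log_le_self 2 hm
  have hhi := Nat.lt_pow_succ_log_self one_lt_two m
  rw [pow_succ] at hhi
  rw [blockRep, ← hmod, Nat.mod_eq_sub_mod hlo, Nat.mod_eq_of_lt (by omega)]
  omega

lemma testBit_sub_blockRep {n k : ℕ} (h : blockRep n k ≤ n) :
    (n - blockRep n k).testBit k = !n.testBit k := by
  have hdiv := Nat.div_add_mod n (2 ^ k)
  have hq : 1 ≤ n / 2 ^ k := by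
    rw [Nat.le_div_iff_mul_le (Nat.two_pow_pos k)]; rw [blockRep] at h; omega
  have hsub : n - blockRep n k = 2 ^ k * (n / 2 ^ k - 1) := by
    rw [blockRep, Nat.mul_sub_one]; omega
  have hbit : n.testBit k = (n / 2 ^ k).testBit 0 := by
    rw [Nat.testBit_div_two_pow, Nat.zero_add]
  obtain ⟨q, hq'⟩ : ∃ q, n / 2 ^ k = q + 1 := ⟨n / 2 ^ k - 1, by omega⟩
  rw [hsub, Nat.testBit_two_pow_mul, hbit, hq', Nat.add_sub_cancel]
  simp only [ge_iff_le, le_refl, decide_true, Nat.sub_self, Bool.true_and, Nat.testBit_zero]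
  rcases Nat.mod_two_eq_zero_or_one q with h2 | h2 <;> simp [Nat.add_mod, h2]

lemma sum_filter_dvd_eq_sum_bitSign (N : ℕ) :
    ∑ m ∈ (Icc 1 N).filter (fun m => 2 ^ Nat.log 2 m ∣ N + 1 - m),
        -bitSign ((N + 1 - m).testBit (Nat.log 2 m)) =
      ∑ k ∈ range (Nat.log 2 (N + 1)), bitSign ((N + 1).testBit k) := by
  refine sum_nbij' (Nat.log 2) (blockRep (N + 1)) ?_ ?_ ?_ ?_ ?_
  · intro m hm
    simp only [mem_filter, mem_Icc] at hm
    have hrep := eq_blockRep (by omega) (by omega) hm.2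
    simp only [mem_range, ← blockRep_lt_iff, ← hrep]
    omega
  · intro k hk
    simp only [mem_range, ← blockRep_lt_iff] at hk
    simp only [mem_filter, mem_Icc, log_blockRep, dvd_sub_blockRep, and_true]
    exact ⟨Nat.le_add_right_of_le Nat.one_le_two_pow, by omega⟩
  · intro m hm
    simp only [mem_filter, mem_Icc] at hm
    exact (eq_blockRep (by omega) (by omega) hm.2).symm
  · intro k _
    exact log_blockRep _ k
  · intro m hm
    simp only [mem_filter, mem_Icc] at hm
    have hrep := eq_blockRep (by omega) (by omega) hm.2
    set k := Nat.log 2 m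
    rw [hrep, testBit_sub_blockRep (by omega), bitSign_not, neg_neg]

lemma card_S_succ (N : ℕ) : ((S (N + 1)).card : ℤ) = (S N).card + f (N + 1) := by
  have hstep : ∀ m ∈ Icc 1 N,
      (if (N + 1 - m).testBit (Nat.log 2 m) then 0 else 1 : ℤ) =
        (if (N - m).testBit (Nat.log 2 m) then 0 else 1) +
          if 2 ^ Nat.log 2 m ∣ N + 1 - m then -bitSign ((N + 1 - m).testBit (Nat.log 2 m))
          else 0 := by
    intro m hm
    rw [mem_Icc] at hm
    rw [show N + 1 - m = N - m + 1 by omega, indicator_testBit_add_one]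
  rw [card_S_eq_sum, card_S_eq_sum, sum_Icc_succ_top (by omega), sum_congr rfl hstep,
    sum_add_distrib, ← sum_filter, sum_filter_dvd_eq_sum_bitSign, f_eq_sum_bitSign N.succ_ne_zero,
    sum_range_succ, testBit_log_two N.succ_ne_zero]
  simp only [tsub_self, Nat.zero_testBit, Bool.false_eq_true, if_false, bitSign_true]
  ring

theorem stmt_3 (n : ℕ) : D n = ((S n).card : ℤ) := by
  induction n with
  | zero => simp [D, S]
  | succ n ih => rw [D, sum_Icc_succ_top (by omega), ← D, ih, card_S_succ]
end

section
/- For positive integers k and n with n < 2^k, |S_{n + 2^k}| = |S_n| + (n+1)·(⌊log₂ n⌋ - k + 2) + 2^k - 2^(⌊log₂ n⌋ + 1). -/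
open Finset

/-- The elements of `S (n + 2 ^ k)` lying strictly between `n` and `2 ^ k`. -/
def midS (n k : ℕ) : Finset ℕ :=
  (Ico (Nat.log 2 n + 1) k).biUnion fun ℓ => Ioo (n + 2 ^ ℓ) (2 ^ (ℓ + 1))

theorem mem_S {n m : ℕ} :
    m ∈ S n ↔ (1 ≤ m ∧ m ≤ n) ∧ (n - m) % 2 ^ (Nat.log 2 m + 1) < 2 ^ Nat.log 2 m := by
  rw [S, mem_filter, mem_Icc]

theorem add_two_pow_mod_two_pow {j k : ℕ} (a : ℕ) (h : j ≤ k) :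
    (a + 2 ^ k) % 2 ^ j = a % 2 ^ j := by
  obtain ⟨c, hc⟩ := Nat.pow_dvd_pow 2 h
  rw [hc, Nat.add_mul_mod_self_left]

section AddTwoPow

variable {n k m : ℕ}

theorem mem_S_add_two_pow_of_le (h : n < 2 ^ k) (hmn : m ≤ n) :
    m ∈ S (n + 2 ^ k) ↔ m ∈ S n := by
  rw [mem_S, mem_S, Nat.sub_add_comm hmn, show 1 ≤ m ∧ m ≤ n + 2 ^ k ↔ 1 ≤ m ∧ m ≤ n by omega]
  refine and_congr_right fun ⟨hm, _⟩ => ?_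
  rw [add_two_pow_mod_two_pow _ (Nat.log_lt_of_lt_pow (by omega) (by omega))]

theorem mem_S_add_two_pow_of_lt_of_lt (hnm : n < m) (hmk : m < 2 ^ k) :
    m ∈ S (n + 2 ^ k) ↔ n + 2 ^ Nat.log 2 m < m := by
  rw [mem_S]
  set ℓ := Nat.log 2 m
  have hlow : 2 ^ ℓ ≤ m := Nat.pow_log_le_self 2 (by omega)
  have hhigh : m < 2 ^ (ℓ + 1) := Nat.lt_pow_succ_log_self one_lt_two m
  have hℓk : ℓ + 1 ≤ k := Nat.log_lt_of_lt_pow (by omega) hmk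
  have hpow : 2 ^ (ℓ + 1) ≤ 2 ^ k := Nat.pow_le_pow_right two_pos hℓk
  have hdouble : 2 ^ (ℓ + 1) = 2 * 2 ^ ℓ := pow_succ' 2 ℓ
  have hmod : (n + 2 ^ k - m) % 2 ^ (ℓ + 1) = n + 2 ^ (ℓ + 1) - m := by
    rw [← Nat.add_mod_right, show n + 2 ^ k - m + 2 ^ (ℓ + 1) = n + 2 ^ (ℓ + 1) - m + 2 ^ k by omega,
      add_two_pow_mod_two_pow _ hℓk, Nat.mod_eq_of_lt (by omega)]
  rw [hmod]
  omega

theorem mem_S_add_two_pow_of_two_pow_le (h : n < 2 ^ k) (hkm : 2 ^ k ≤ m) :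
    m ∈ S (n + 2 ^ k) ↔ m ≤ n + 2 ^ k := by
  have hdouble : 2 ^ (k + 1) = 2 * 2 ^ k := pow_succ' 2 k
  refine ⟨fun hm => (mem_S.mp hm).1.2, fun hm => ?_⟩
  have hlog : Nat.log 2 m = k := Nat.log_eq_of_pow_le_of_lt_pow hkm (by omega)
  have : 1 ≤ 2 ^ k := Nat.one_le_two_pow
  rw [mem_S, hlog, Nat.mod_eq_of_lt (by omega)]
  omega

theorem mem_midS (hn : 0 < n) :
    m ∈ midS n k ↔ n < m ∧ m < 2 ^ k ∧ n + 2 ^ Nat.log 2 m < m := by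
  simp only [midS, mem_biUnion, mem_Ico, mem_Ioo]
  constructor
  · rintro ⟨ℓ, ⟨-, hℓk⟩, hlow, hhigh⟩
    have hlog : Nat.log 2 m = ℓ := Nat.log_eq_of_pow_le_of_lt_pow (by omega) hhigh
    have hpow : 2 ^ (ℓ + 1) ≤ 2 ^ k := Nat.pow_le_pow_right two_pos hℓk
    exact ⟨by omega, by omega, hlog ▸ hlow⟩
  · rintro ⟨hnm, hmk, hlow⟩
    have hhigh : m < 2 ^ (Nat.log 2 m + 1) := Nat.lt_pow_succ_log_self one_lt_two m
    have hdouble : 2 ^ (Nat.log 2 m + 1) = 2 * 2 ^ Nat.log 2 m := pow_succ' 2 _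
    exact ⟨Nat.log 2 m, ⟨Nat.log_lt_of_lt_pow hn.ne' (by omega), Nat.log_lt_of_lt_pow (by omega) hmk⟩,
      hlow, hhigh⟩

theorem S_add_two_pow (hn : 0 < n) (h : n < 2 ^ k) :
    S (n + 2 ^ k) = S n ∪ midS n k ∪ Icc (2 ^ k) (n + 2 ^ k) := by
  ext m
  rw [mem_union, mem_union, mem_midS hn, mem_Icc]
  have hS : m ∈ S n → m ≤ n := fun hm => (mem_S.mp hm).1.2
  rcases le_or_gt m n with hmn | hnm
  · rw [mem_S_add_two_pow_of_le h hmn]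
    simp only [show ¬n < m by omega, show ¬2 ^ k ≤ m by omega, false_and, or_false]
  rcases lt_or_ge m (2 ^ k) with hmk | hkm
  · rw [mem_S_add_two_pow_of_lt_of_lt hnm hmk, iff_false_intro fun hm => hnm.not_ge (hS hm)]
    simp only [hnm, hmk, show ¬2 ^ k ≤ m by omega, true_and, false_and, false_or, or_false]
  · rw [mem_S_add_two_pow_of_two_pow_le h hkm, iff_false_intro fun hm => hnm.not_ge (hS hm)]
    simp only [hkm, show ¬m < 2 ^ k by omega, true_and, false_and, and_false, false_or]

theorem card_S_add_two_pow (hn : 0 < n) (h : n < 2 ^ k) :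
    #(S (n + 2 ^ k)) = #(S n) + #(midS n k) + (n + 1) := by
  have hS : ∀ m ∈ S n, m ≤ n := fun m hm => (mem_S.mp hm).1.2
  have hmid : ∀ m ∈ midS n k, n < m ∧ m < 2 ^ k := fun m hm =>
    ((mem_midS hn).mp hm).imp_right And.left
  have hdisj₁ : Disjoint (S n) (midS n k) :=
    disjoint_left.mpr fun m h₁ h₂ => (hmid m h₂).1.not_ge (hS m h₁)
  have hdisj₂ : Disjoint (S n ∪ midS n k) (Icc (2 ^ k) (n + 2 ^ k)) := by
    refine disjoint_left.mpr fun m h₁ h₂ => ?_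
    have := (mem_Icc.mp h₂).1
    rcases mem_union.mp h₁ with h₁ | h₁
    · have := hS m h₁; omega
    · have := hmid m h₁; omega
  rw [S_add_two_pow hn h, card_union_of_disjoint hdisj₂, card_union_of_disjoint hdisj₁,
    Nat.card_Icc]
  omega

end AddTwoPow

theorem card_Ioo_add_two_pow {n ℓ : ℕ} (h : n < 2 ^ ℓ) :
    ((Ioo (n + 2 ^ ℓ) (2 ^ (ℓ + 1))).card : ℤ) = 2 ^ ℓ - (n + 1) := by
  rw [Nat.card_Ioo, pow_succ, Nat.cast_sub (by omega), Nat.cast_sub (by omega)]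
  push_cast
  ring

theorem sum_Ico_two_pow {a b : ℕ} (h : a ≤ b) : ∑ ℓ ∈ Ico a b, (2 : ℤ) ^ ℓ = 2 ^ b - 2 ^ a := by
  simpa using geom_sum_Ico_mul (2 : ℤ) h

theorem card_midS {n k : ℕ} (hn : 0 < n) (hk : Nat.log 2 n < k) :
    ((midS n k).card : ℤ) = 2 ^ k - 2 ^ (Nat.log 2 n + 1) - (k - (Nat.log 2 n + 1)) * (n + 1) := by
  have hdisj : (Ico (Nat.log 2 n + 1) k : Set ℕ).PairwiseDisjoint
      fun ℓ => Ioo (n + 2 ^ ℓ) (2 ^ (ℓ + 1)) := by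
    intro i _ j _ hij
    refine disjoint_left.mpr fun m hi hj => hij ?_
    rw [mem_Ioo] at hi hj
    rw [← Nat.log_eq_of_pow_le_of_lt_pow (by omega) hi.2,
      ← Nat.log_eq_of_pow_le_of_lt_pow (by omega) hj.2]
  have hblock : ∀ ℓ ∈ Ico (Nat.log 2 n + 1) k,
      ((Ioo (n + 2 ^ ℓ) (2 ^ (ℓ + 1))).card : ℤ) = 2 ^ ℓ - (n + 1) := fun ℓ hℓ =>
    card_Ioo_add_two_pow <| Nat.lt_pow_of_log_lt one_lt_two (mem_Ico.mp hℓ).1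
  rw [midS, card_biUnion hdisj, Nat.cast_sum, sum_congr rfl hblock, sum_sub_distrib,
    sum_Ico_two_pow (a := Nat.log 2 n + 1) hk, sum_const, Nat.card_Ico, nsmul_eq_mul, Nat.cast_sub hk]
  push_cast
  ring

theorem stmt_4_general (n k : ℕ) (hn : 0 < n) (h : n < 2 ^ k) :
    ((S (n + 2 ^ k)).card : ℤ) =
      (S n).card + (n + 1) * ((Nat.log 2 n : ℤ) - k + 2) + 2 ^ k - 2 ^ (Nat.log 2 n + 1) := by
  rw [card_S_add_two_pow hn h]
  push_cast [card_midS hn (Nat.log_lt_of_lt_pow hn.ne' h)]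
  ring

theorem stmt_4 (n k : ℕ) (hn : 0 < n) (hk : 0 < k) (h : n < 2 ^ k) :
    ((S (n + 2 ^ k)).card : ℤ) =
      (S n).card + (n + 1) * ((Nat.log 2 n : ℤ) - k + 2) + 2 ^ k - 2 ^ (Nat.log 2 n + 1) :=
  stmt_4_general n k hn h
end

section
/- For every real ξ ∈ [0,1] and every positive integer m, τ((ξ+1)·2^(−m)) = 2^(−m)·(m·(ξ+1) − 2ξ + τ(ξ)). -/
/-- Distance from y to the nearest integer. -/
noncomputable def s (y : ℝ) : ℝ := |y - round y|

/-- The Takagi function. -/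
noncomputable def τ (x : ℝ) : ℝ := ∑' n : ℕ, s (2 ^ n * x) / 2 ^ n

/-!
Peeling off the first term of the series gives `τ x = s x + τ (2 * x) / 2`, and `τ` is
`1`-periodic. On `[0, 1]` the first identity reads `τ (x / 2) = x / 2 + τ x / 2`, while at
`x = ξ + 1 ∈ [1, 2]` it reads `τ ((ξ + 1) / 2) = (1 - ξ) / 2 + τ ξ / 2`. This settles `m = 1`;
since `y = (ξ + 1) / 2 ^ m` lies in `[0, 1]`, each further halving `y ↦ y / 2` halves the
previous value and adds `y / 2`.
-/

lemma s_add_intCast (y : ℝ) (k : ℤ) : s (y + k) = s y := by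
  rw [s, s, round_add_intCast, Int.cast_add, add_sub_add_right_eq_sub]

lemma s_eq_min {y : ℝ} (h0 : 0 ≤ y) (h1 : y ≤ 1) : s y = min y (1 - y) := by
  rcases h1.lt_or_eq with h1 | rfl
  · rw [s, abs_sub_round_eq_min, Int.fract_eq_self.2 ⟨h0, h1⟩]
  · simp [s]

lemma summable_τ (x : ℝ) : Summable fun n : ℕ => s (2 ^ n * x) / 2 ^ n := by
  refine .of_nonneg_of_le (fun n => by unfold s; positivity) (fun n => ?_) summable_geometric_two
  rw [one_div_pow]
  gcongr
  exact (abs_sub_round _).trans (by norm_num)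

lemma τ_eq_s_add_τ_two_mul (x : ℝ) : τ x = s x + τ (2 * x) / 2 := by
  rw [τ, (summable_τ x).tsum_eq_zero_add, τ, ← tsum_div_const]
  congr 1
  · simp
  · congr 1 with n
    rw [pow_succ, div_div, mul_assoc]

lemma τ_add_intCast (x : ℝ) (k : ℤ) : τ (x + k) = τ x := by
  unfold τ
  congr 1 with n
  rw [mul_add, show (2 : ℝ) ^ n * k = ((2 ^ n * k : ℤ) : ℝ) by push_cast; rfl, s_add_intCast]

lemma τ_half_of_mem_Icc {x : ℝ} (hx : x ∈ Set.Icc (0 : ℝ) 1) : τ (x / 2) = x / 2 + τ x / 2 := by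
  obtain ⟨h0, h1⟩ := hx
  rw [τ_eq_s_add_τ_two_mul, mul_div_cancel₀ _ two_ne_zero,
    s_eq_min (by linarith) (by linarith), min_eq_left (by linarith)]

lemma τ_half_one_add {ξ : ℝ} (hξ : ξ ∈ Set.Icc (0 : ℝ) 1) :
    τ ((ξ + 1) / 2) = (1 - ξ) / 2 + τ ξ / 2 := by
  obtain ⟨h0, h1⟩ := hξ
  rw [τ_eq_s_add_τ_two_mul, mul_div_cancel₀ _ two_ne_zero, ← Int.cast_one, τ_add_intCast,
    s_eq_min (by linarith) (by linarith), min_eq_right (by linarith)]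
  ring

lemma τ_one_add_div_two_pow {ξ : ℝ} (hξ : ξ ∈ Set.Icc (0 : ℝ) 1) {m : ℕ} (hm : 1 ≤ m) :
    τ ((ξ + 1) / 2 ^ m) = (m * (ξ + 1) - 2 * ξ + τ ξ) / 2 ^ m := by
  induction m, hm using Nat.le_induction with
  | base => rw [pow_one, τ_half_one_add hξ]; push_cast; ring
  | succ m hm ih =>
    have hmem : (ξ + 1) / 2 ^ m ∈ Set.Icc (0 : ℝ) 1 := by
      obtain ⟨h0, h1⟩ := hξ
      have : (2 : ℝ) ≤ 2 ^ m := by simpa using pow_le_pow_right₀ one_le_two hm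
      constructor
      · positivity
      · rw [div_le_one (by positivity)]; linarith
    rw [pow_succ, ← div_div, τ_half_of_mem_Icc hmem, ih]
    push_cast
    ring

theorem stmt_6 (ξ : ℝ) (hξ : ξ ∈ Set.Icc (0 : ℝ) 1) (m : ℕ) (hm : 0 < m) :
    τ ((ξ + 1) * 2 ^ (-(m : ℤ))) =
      2 ^ (-(m : ℤ)) * ((m : ℝ) * (ξ + 1) - 2 * ξ + τ ξ) := by
  rw [zpow_neg, zpow_natCast, ← div_eq_mul_inv, τ_one_add_div_two_pow hξ hm, inv_mul_eq_div]
end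

section
/- For nonnegative integers n, k with n ≤ 2^k, D(2^(k+2) − n − 1) = 2^(k+1) − 4n + D(2^(k+1) + 2^k + n − 1). -/
open Finset

lemma f_two_mul_add {m b : ℕ} (hm : 0 < m) (hb : b < 2) : f (2 * m + b) = f m + 2 * b - 1 := by
  unfold f
  rw [add_comm, Nat.digits_add 2 one_lt_two b m hb (Or.inr hm.ne')]
  interval_cases b <;> simp <;> ring

lemma f_add_f_complement {a : ℕ} (ha : 0 < a) (k : ℕ) {j : ℕ} (hj : j < 2 ^ k) :
    f (2 ^ k * a + j) + f (2 ^ k * a + (2 ^ k - 1 - j)) = 2 * f a := by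
  induction k generalizing j with
  | zero =>
    obtain rfl : j = 0 := by simpa using hj
    simp [two_mul]
  | succ k ih =>
    have hpow : 0 < 2 ^ k := Nat.two_pow_pos k
    rw [pow_succ] at hj ⊢
    have hq : j / 2 < 2 ^ k := by omega
    have hr : j % 2 < 2 := Nat.mod_lt j two_pos
    have hj' : 2 ^ k * 2 * a + j = 2 * (2 ^ k * a + j / 2) + j % 2 := by
      rw [mul_right_comm]; omega
    have hjc : 2 ^ k * 2 * a + (2 ^ k * 2 - 1 - j) =
        2 * (2 ^ k * a + (2 ^ k - 1 - j / 2)) + (1 - j % 2) := by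
      rw [mul_right_comm]; omega
    have hr' : ((1 - j % 2 : ℕ) : ℤ) = 1 - (j % 2 : ℕ) := by omega
    rw [hj', hjc, f_two_mul_add (by positivity) hr, f_two_mul_add (by positivity) (by omega),
      hr', ← ih hq]
    ring

lemma D_add (a m : ℕ) : D (a + m) = D a + ∑ i ∈ range m, f (a + 1 + i) := by
  induction m with
  | zero => simp
  | succ m ih =>
    rw [← add_assoc, D, sum_Icc_succ_top (by omega), ← D, ih, sum_range_succ]
    ring_nf

lemma sum_range_tsub_of_add_reflect_eq (g : ℕ → ℤ) {N n : ℕ} (t : ℤ) (hn : n ≤ N)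
    (hg : ∀ i < N, g i + g (N - 1 - i) = 2 * t) :
    ∑ i ∈ range (N - n), g i = t * (N - 2 * n) + ∑ i ∈ range n, g i := by
  have hfull : ∑ i ∈ range N, g i = t * N := by
    have h2 : ∑ i ∈ range N, (g i + g (N - 1 - i)) = ∑ i ∈ range N, 2 * t :=
      sum_congr rfl fun i hi => hg i (mem_range.mp hi)
    rw [sum_add_distrib, sum_range_reflect g N, sum_const, card_range, nsmul_eq_mul] at h2
    linarith
  have htail : ∑ i ∈ range n, g (N - n + i) = 2 * t * n - ∑ i ∈ range n, g i := by
    have h2 : ∑ i ∈ range n, (g (N - n + i) + g (n - 1 - i)) = ∑ i ∈ range n, 2 * t :=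
      sum_congr rfl fun i hi => by
        have hi := mem_range.mp hi
        rw [show n - 1 - i = N - 1 - (N - n + i) by omega]
        exact hg _ (by omega)
    rw [sum_add_distrib, sum_range_reflect g n, sum_const, card_range, nsmul_eq_mul] at h2
    linarith
  have hsplit := sum_range_add g (N - n) n
  rw [Nat.sub_add_cancel hn, hfull, htail] at hsplit
  linarith

theorem stmt_11 (n k : ℕ) (h : n ≤ 2 ^ k) :
    D (2 ^ (k + 2) - n - 1) = 2 ^ (k + 1) - 4 * n + D (2 ^ (k + 1) + 2 ^ k + n - 1) := by
  have hpow : 0 < 2 ^ k := Nat.two_pow_pos k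
  have h4 : 2 ^ (k + 2) = 2 ^ k * 4 := by ring
  have h2 : 2 ^ (k + 1) = 2 ^ k * 2 := by ring
  obtain ⟨c, hc⟩ : ∃ c, c + 1 = 2 ^ k * 3 := ⟨2 ^ k * 3 - 1, by omega⟩
  have hpair : ∀ i < 2 ^ k, f (c + 1 + i) + f (c + 1 + (2 ^ k - 1 - i)) = 2 * 2 := fun i hi => by
    rw [hc, f_add_f_complement three_pos k hi, show f 3 = 2 by norm_num [f]]
  rw [show 2 ^ (k + 2) - n - 1 = c + (2 ^ k - n) by omega,
    show 2 ^ (k + 1) + 2 ^ k + n - 1 = c + n by omega, D_add, D_add,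
    sum_range_tsub_of_add_reflect_eq _ 2 h hpair]
  push_cast [h2]
  ring
end

section
/- For nonnegative integers n, k with n ≤ 2^k, D(2^(k+1) + n − 1) = n + D(2^(k+1) − n − 1). -/
lemma f_two_mul {m : ℕ} (hm : 0 < m) : f (2 * m) = f m - 1 := by
  rw [f, f, Nat.digits_def' one_lt_two (by omega), Nat.mul_mod_right,
    Nat.mul_div_cancel_left _ two_pos]
  simp only [List.count_cons, List.length_cons]
  push_cast
  ring

lemma f_two_mul_add_one (m : ℕ) : f (2 * m + 1) = f m + 1 := by
  rw [f, f, Nat.digits_def' one_lt_two (by omega), show (2 * m + 1) % 2 = 1 by omega,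
    show (2 * m + 1) / 2 = m by omega]
  simp only [List.count_cons_self, List.length_cons]
  push_cast
  ring

lemma f_two_pow_succ_add_add_f_two_pow_add {k i j : ℕ} (h : i + j + 1 = 2 ^ k) :
    f (2 ^ (k + 1) + i) + f (2 ^ k + j) = 1 := by
  induction k generalizing i j with
  | zero =>
    obtain ⟨rfl, rfl⟩ : i = 0 ∧ j = 0 := by simp at h; omega
    norm_num [f]
  | succ k ih =>
    rw [pow_succ] at h
    rcases Nat.even_or_odd' i with ⟨a, rfl | rfl⟩
    · obtain ⟨b, rfl⟩ : ∃ b, j = 2 * b + 1 := ⟨j / 2, by omega⟩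
      have hab : a + b + 1 = 2 ^ k := by omega
      rw [show 2 ^ (k + 1 + 1) + 2 * a = 2 * (2 ^ (k + 1) + a) by ring,
        show 2 ^ (k + 1) + (2 * b + 1) = 2 * (2 ^ k + b) + 1 by ring,
        f_two_mul (by positivity), f_two_mul_add_one, ← ih hab]
      ring
    · obtain ⟨b, rfl⟩ : ∃ b, j = 2 * b := ⟨j / 2, by omega⟩
      have hab : a + b + 1 = 2 ^ k := by omega
      rw [show 2 ^ (k + 1 + 1) + (2 * a + 1) = 2 * (2 ^ (k + 1) + a) + 1 by ring,
        show 2 ^ (k + 1) + 2 * b = 2 * (2 ^ k + b) by ring,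
        f_two_mul (by positivity), f_two_mul_add_one, ← ih hab]
      ring

lemma D_eq_D_sub_one_add {m : ℕ} (hm : 0 < m) : D m = D (m - 1) + f m := by
  obtain ⟨m, rfl⟩ := Nat.exists_eq_add_one_of_ne_zero hm.ne'
  exact Finset.sum_Icc_succ_top (Nat.le_add_left 1 m) f

theorem stmt_15 (n k : ℕ) (h : n ≤ 2 ^ k) :
    D (2 ^ (k + 1) + n - 1) = n + D (2 ^ (k + 1) - n - 1) := by
  induction n with
  | zero => simp
  | succ n ih =>
    have hpow : 2 ^ (k + 1) = 2 ^ k + 2 ^ k := by ring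
    have hpair := f_two_pow_succ_add_add_f_two_pow_add (k := k) (i := n) (j := 2 ^ k - n - 1)
      (by omega)
    rw [Nat.add_succ_sub_one, D_eq_D_sub_one_add (by positivity), ih (by omega),
      D_eq_D_sub_one_add (m := 2 ^ (k + 1) - n - 1) (by omega),
      show 2 ^ (k + 1) - n - 1 - 1 = 2 ^ (k + 1) - (n + 1) - 1 by omega,
      show 2 ^ (k + 1) - n - 1 = 2 ^ k + (2 ^ k - n - 1) by omega]
    push_cast
    linarith
end
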